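/- Let S be a generalized dual Heyting algebra and let a₁, a₂, b ∈ S with a₁ ∼ a₂ (consonant). Then (a₁ ∧ a₂) ∖ b = (a₁ ∖ b) ∧ (a₂ ∖ b), where ∖ denotes the pseudo-difference in S. -/

import Mathlib

/-! The inequality `(a₁ ∖ b) ⊓ (a₂ ∖ b) ≤ (a₁ ⊓ a₂) ∖ b` is the nontrivial one. If `a₁ ≤ a₂ ⊔ x`
and `a₂ ≤ a₁ ⊔ y`, distributivity gives `aᵢ ≤ (a₁ ⊓ a₂) ⊔ x` resp. `⊔ y`, so by minimality of the
pseudo-difference `a₁ ∖ b ≤ (a₁ ⊓ a₂) ∖ b ⊔ x` and `a₂ ∖ b ≤ (a₁ ⊓ a₂) ∖ b ⊔ y`. Meeting the two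
and distributing once more leaves `(a₁ ⊓ a₂) ∖ b ⊔ (x ⊓ y) = (a₁ ⊓ a₂) ∖ b`. -/

theorem le_inf_sup_of_le_sup {α : Type*} [DistribLattice α] {a b c : α} (h : a ≤ b ⊔ c) :
    a ≤ a ⊓ b ⊔ c := by
  rw [sup_inf_right]
  exact le_inf le_sup_left h

section PseudoDifference

variable {S : Type*} [Lattice S] {sd : S → S → S}

theorem pseudoDiff_le_sup_of_le_sup (hsd1 : ∀ a b : S, a ≤ b ⊔ sd a b)
    (hsd2 : ∀ a b x : S, a ≤ b ⊔ x → sd a b ≤ x) {a c x : S} (b : S) (h : a ≤ c ⊔ x) :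
    sd a b ≤ sd c b ⊔ x :=
  hsd2 a b _ <| calc
    a ≤ c ⊔ x := h
    _ ≤ b ⊔ sd c b ⊔ x := sup_le_sup_right (hsd1 c b) x
    _ = b ⊔ (sd c b ⊔ x) := sup_assoc ..

theorem pseudoDiff_mono_left (hsd1 : ∀ a b : S, a ≤ b ⊔ sd a b)
    (hsd2 : ∀ a b x : S, a ≤ b ⊔ x → sd a b ≤ x) {a c : S} (b : S) (h : a ≤ c) :
    sd a b ≤ sd c b :=
  hsd2 a b _ (h.trans (hsd1 c b))

end PseudoDifference

/-- in a generalized dual Heyting algebra, if a₁ ∼ a₂ then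
(a₁ ∧ a₂) ∖ b = (a₁ ∖ b) ∧ (a₂ ∖ b). -/
theorem stmt4 {S : Type*} [DistribLattice S] [OrderBot S]
    (sd : S → S → S)
    (hsd1 : ∀ a b : S, a ≤ b ⊔ sd a b)
    (hsd2 : ∀ a b x : S, a ≤ b ⊔ x → sd a b ≤ x)
    (a₁ a₂ b : S)
    (hcons : ∃ x y : S, a₁ ≤ a₂ ⊔ x ∧ a₂ ≤ a₁ ⊔ y ∧ x ⊓ y = ⊥) :
    sd (a₁ ⊓ a₂) b = sd a₁ b ⊓ sd a₂ b := by
  obtain ⟨x, y, hx, hy, hxy⟩ := hcons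
  refine le_antisymm (le_inf (pseudoDiff_mono_left hsd1 hsd2 b inf_le_left)
    (pseudoDiff_mono_left hsd1 hsd2 b inf_le_right)) ?_
  have h₁ : sd a₁ b ≤ sd (a₁ ⊓ a₂) b ⊔ x :=
    pseudoDiff_le_sup_of_le_sup hsd1 hsd2 b (le_inf_sup_of_le_sup hx)
  have h₂ : sd a₂ b ≤ sd (a₁ ⊓ a₂) b ⊔ y :=
    pseudoDiff_le_sup_of_le_sup hsd1 hsd2 b (inf_comm a₂ a₁ ▸ le_inf_sup_of_le_sup hy)
  calc sd a₁ b ⊓ sd a₂ b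
      ≤ (sd (a₁ ⊓ a₂) b ⊔ x) ⊓ (sd (a₁ ⊓ a₂) b ⊔ y) := inf_le_inf h₁ h₂
    _ = sd (a₁ ⊓ a₂) b := by rw [← sup_inf_left, hxy, sup_bot_eq]
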